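/- Let Γ be a group acting on holomorphic functions on the upper half-plane via weight-k slash operators: (f|_k γ)(z) = f(γz) j(γ,z)^{−k}, extended linearly to the group ring. Suppose F, G: H → C satisfy F|_{k₁}(γ_1−1)···(γ_s−1) = 0 and G|_{k₂}(δ_1−1)···(δ_t−1) = 0 for all γ_i, δ_j ∈ Γ. Then for all γ_1,...,γ_{s+t−2} ∈ Γ: (F·G)|_{k₁+k₂}(γ_1−1)···(γ_{s+t−2}−1) = Σ over shuffles (φ,ψ) of {1,...,s+t−2} into blocks of sizes s−1 and t−1 of [F|_{k₁}(γ_{φ(1)}−1)···(γ_{φ(s−1)}−1)] · [G|_{k₂}(γ_{ψ(s)}−1)···(γ_{ψ(s+t−2)}−1)]. -/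

import Mathlib

open UpperHalfPlane

/-- `j(γ,z) = cz + d` for `γ = [[a,b],[c,d]] ∈ SL(2,ℝ)`. -/
def jFactor (γ : Matrix.SpecialLinearGroup (Fin 2) ℝ) (z : ℍ) : ℂ :=
  ((γ 1 0 : ℝ) : ℂ) * (z : ℂ) + ((γ 1 1 : ℝ) : ℂ)

/-- The weight-`k` slash operator `(f ∣[k] γ)(z) = f(γz) j(γ,z)^{−k}`. -/
noncomputable def slashSL (k : ℤ) (γ : Matrix.SpecialLinearGroup (Fin 2) ℝ)
    (f : ℍ → ℂ) : ℍ → ℂ :=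
  fun z => f (γ • z) * jFactor γ z ^ (-k)

/-- Iterated application of the group-ring operators `(γ₁−1)⋯(γₙ−1)` to `F` via
the weight-`k` slash action: `F ↦ F∣[k]γ − F`, applied successively. -/
noncomputable def iterSlashDiff (k : ℤ) (F : ℍ → ℂ) :
    List (Matrix.SpecialLinearGroup (Fin 2) ℝ) → ℍ → ℂ
  | [] => F
  | γ :: l => iterSlashDiff k (slashSL k γ F - F) l

/-!
Slashing is multiplicative, `(FG)∣γ = (F∣γ)(G∣γ)`, so each operator `γ - 1` obeys the twisted
Leibniz rule `(FG)∣(γ-1) = (F∣(γ-1))G + F(G∣(γ-1)) + (F∣(γ-1))(G∣(γ-1))`. Expanding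
`(γ₁-1)⋯(γₙ-1)` therefore gives a sum over colourings of `{1,…,n}` by three colours, the `F`-factor
seeing the positions coloured "F" or "both" and the `G`-factor those coloured "G" or "both".
Since `F` is killed by any `s` and `G` by any `t` such operators, for `n = s + t - 2` a term
survives only if `F` sees exactly `s - 1` positions and `G` exactly `t - 1`; then no position is
coloured "both", and the surviving colourings are exactly the shuffles.
-/

local notation "SL2" => Matrix.SpecialLinearGroup (Fin 2) ℝ

open Finset

lemma jFactor_ne_zero (γ : SL2) (z : ℍ) : jFactor γ z ≠ 0 :=
  denom_ne_zero (γ : GL (Fin 2) ℝ) z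

lemma slashSL_add (k : ℤ) (γ : SL2) (f g : ℍ → ℂ) :
    slashSL k γ (f + g) = slashSL k γ f + slashSL k γ g := by
  funext z
  simp [slashSL, add_mul]

lemma slashSL_mul (k₁ k₂ : ℤ) (γ : SL2) (f g : ℍ → ℂ) :
    slashSL (k₁ + k₂) γ (f * g) = slashSL k₁ γ f * slashSL k₂ γ g := by
  funext z
  simp only [slashSL, Pi.mul_apply, neg_add, zpow_add₀ (jFactor_ne_zero γ z)]
  ring

lemma slashSL_mul_sub_mul (k₁ k₂ : ℤ) (γ : SL2) (f g : ℍ → ℂ) :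
    slashSL (k₁ + k₂) γ (f * g) - f * g =
      (slashSL k₁ γ f - f) * g + f * (slashSL k₂ γ g - g) +
        (slashSL k₁ γ f - f) * (slashSL k₂ γ g - g) := by
  rw [slashSL_mul]
  ring

lemma iterSlashDiff_cons (k : ℤ) (f : ℍ → ℂ) (γ : SL2) (l : List SL2) :
    iterSlashDiff k f (γ :: l) = iterSlashDiff k (slashSL k γ f - f) l := rfl

lemma iterSlashDiff_add (k : ℤ) (f g : ℍ → ℂ) (l : List SL2) :
    iterSlashDiff k (f + g) l = iterSlashDiff k f l + iterSlashDiff k g l := by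
  induction l generalizing f g with
  | nil => rfl
  | cons γ l ih =>
    simp only [iterSlashDiff_cons, slashSL_add, add_sub_add_comm, ih]

lemma iterSlashDiff_zero (k : ℤ) (l : List SL2) : iterSlashDiff k 0 l = 0 := by
  simpa using iterSlashDiff_add k 0 0 l

lemma iterSlashDiff_append (k : ℤ) (f : ℍ → ℂ) (l₁ l₂ : List SL2) :
    iterSlashDiff k f (l₁ ++ l₂) = iterSlashDiff k (iterSlashDiff k f l₁) l₂ := by
  induction l₁ generalizing f with
  | nil => rfl
  | cons γ l ih => exact ih _

lemma iterSlashDiff_eq_zero_of_length_le {Γ : Subgroup SL2} {k : ℤ} {f : ℍ → ℂ} {s : ℕ}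
    (hf : ∀ γ : Fin s → Γ, iterSlashDiff k f (List.ofFn fun i => (γ i : SL2)) = 0)
    {l : List SL2} (hlΓ : ∀ x ∈ l, x ∈ Γ) (hl : s ≤ l.length) : iterSlashDiff k f l = 0 := by
  have htake : iterSlashDiff k f (l.take s) = 0 := by
    obtain ⟨l', hl', hl's⟩ : ∃ l', l.take s = l' ∧ l'.length = s :=
      ⟨_, rfl, List.length_take_of_le hl⟩
    subst hl's
    simpa [hl', List.ofFn_getElem] using
      hf fun i => ⟨l'[i], hlΓ _ (List.mem_of_mem_take (by rw [hl']; exact List.getElem_mem _))⟩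
  rw [← List.take_append_drop s l, iterSlashDiff_append, htake, iterSlashDiff_zero]

section Subword

variable {α : Type*} {n : ℕ}

def subword (γ : Fin n → α) (A : Finset (Fin n)) : List α := A.sort.map γ

@[simp]
lemma length_subword (γ : Fin n → α) (A : Finset (Fin n)) : (subword γ A).length = #A := by
  simp [subword]

lemma subword_map_succ (γ : Fin (n + 1) → α) (A : Finset (Fin n)) :
    subword γ (A.map (Fin.succEmb n)) = subword (fun i => γ i.succ) A := by
  rw [subword, ← (Fin.strictMono_succ.strictMonoOn (s := (A : Set (Fin n)))).map_finsetSort]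
  simp [subword]

lemma subword_cons_zero (γ : Fin (n + 1) → α) (A : Finset (Fin n)) (h) :
    subword γ ((A.map (Fin.succEmb n)).cons 0 h) = γ 0 :: subword (fun i => γ i.succ) A := by
  rw [subword, sort_cons _ (fun i _ => Fin.zero_le i), List.map_cons, ← subword, subword_map_succ]

lemma subword_filter_succ (γ : Fin (n + 1) → α) (q : Fin (n + 1) → Prop) [DecidablePred q] :
    subword γ {i | q i} =
      if q 0 then γ 0 :: subword (fun i => γ i.succ) {i | q i.succ}
      else subword (fun i => γ i.succ) {i | q i.succ} := by
  rw [show (univ : Finset (Fin (n + 1))) = cons 0 (univ.map (Fin.succEmb n)) (by simp) from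
    Fin.univ_succ n]
  -- after `simp only`, the two sides differ only in their `DecidablePred` instances
  by_cases hq : q 0
  · simp only [filter_cons, hq, if_true, filter_map, Function.comp_def, Fin.coe_succEmb,
      subword_cons_zero]
    rfl
  · simp only [filter_cons, hq, if_false, filter_map, Function.comp_def, Fin.coe_succEmb,
      subword_map_succ]
    rfl

lemma subword_image_of_strictMono {m : ℕ} (γ : Fin n → α) {φ : Fin m → Fin n}
    (hφ : StrictMono φ) : subword γ (univ.image φ) = List.ofFn fun i => γ (φ i) := by
  rw [← show univ.map ⟨φ, hφ.injective⟩ = univ.image φ from map_eq_image _ _, subword,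
    ← StrictMonoOn.map_finsetSort _ _ fun a _ b _ h => hφ h]
  simp [List.ofFn_eq_map, Fin.sort_univ]

end Subword

/-- Colour `c i = 0, 1, 2` records whether the factor `γ i - 1` acts on `f` only, on `g` only,
or on both, as in the three terms of `slashSL_mul_sub_mul`. -/
theorem iterSlashDiff_mul_ofFn (k₁ k₂ : ℤ) {n : ℕ} (γ : Fin n → SL2) (f g : ℍ → ℂ) :
    iterSlashDiff (k₁ + k₂) (f * g) (List.ofFn γ) =
      ∑ c : Fin n → Fin 3, iterSlashDiff k₁ f (subword γ {i | c i ≠ 1}) *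
        iterSlashDiff k₂ g (subword γ {i | c i ≠ 0}) := by
  induction n generalizing f g with
  | zero => simp [subword, iterSlashDiff]
  | succ n ih =>
    rw [List.ofFn_succ, iterSlashDiff_cons, slashSL_mul_sub_mul, iterSlashDiff_add,
      iterSlashDiff_add, ih, ih, ih, ← (Fin.consEquiv fun _ => Fin 3).sum_comp,
      Fintype.sum_prod_type, Fin.sum_univ_three]
    simp only [Fin.consEquiv_apply, subword_filter_succ, Fin.cons_zero, Fin.cons_succ]
    simp [iterSlashDiff_cons]

theorem sum_fin_three_eq_sum_card {ι R : Type*} [Fintype ι] [DecidableEq ι]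
    [NonUnitalNonAssocSemiring R] {a b : ℕ} (hab : a + b = Fintype.card ι)
    (f g : Finset ι → R) (hf : ∀ A, a < #A → f A = 0) (hg : ∀ B, b < #B → g B = 0) :
    ∑ c : ι → Fin 3, f {i | c i ≠ 1} * g {i | c i ≠ 0} =
      ∑ A : {A : Finset ι // #A = a}, f A * g (A : Finset ι)ᶜ := by
  let e (A : {A : Finset ι // #A = a}) (i : ι) : Fin 3 := if i ∈ A.1 then 0 else 1
  have he : ∀ A, ({i | e A i ≠ 1} : Finset ι) = A ∧
      ({i | e A i ≠ 0} : Finset ι) = (A : Finset ι)ᶜ := by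
    intro A
    constructor <;> ext i <;> by_cases hi : i ∈ A.1 <;> simp [e, hi]
  refine (Fintype.sum_of_injective e ?_ _ _ ?_ fun A => by rw [(he A).1, (he A).2]).symm
  · intro A A' hAA'
    apply Subtype.ext
    rw [← (he A).1, ← (he A').1, hAA']
  -- A colouring with a nonzero term has at most `a` positions `≠ 1` and at most `b` positions
  -- `≠ 0`; these cover `ι`, so both bounds are attained and the colour `2` does not occur.
  · intro c hc
    by_contra hne
    set A : Finset ι := {i | c i ≠ 1}
    set B : Finset ι := {i | c i ≠ 0}
    have hA : #A ≤ a := not_lt.mp fun h => hne (by rw [hf A h, zero_mul])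
    have hB : #B ≤ b := not_lt.mp fun h => hne (by rw [hg B h, mul_zero])
    have hAB : #(A ∪ B) + #(A ∩ B) = #A + #B := card_union_add_card_inter A B
    have hunion : A ∪ B = univ := by
      ext i
      simp only [A, B, mem_union, mem_filter, mem_univ, true_and, iff_true]
      omega
    rw [hunion, card_univ] at hAB
    have hinter : A ∩ B = ∅ := card_eq_zero.mp (by omega)
    refine hc ⟨⟨A, by omega⟩, funext fun i => ?_⟩
    have hi : i ∉ A ∩ B := by simp [hinter]
    simp only [A, B, e, mem_inter, mem_filter, mem_univ, true_and] at hi ⊢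
    split_ifs <;> omega

def Shuffle (a b n : ℕ) : Type :=
  {q : (Fin a → Fin n) × (Fin b → Fin n) //
    StrictMono q.1 ∧ StrictMono q.2 ∧ Disjoint (Set.range q.1) (Set.range q.2) ∧
      Set.range q.1 ∪ Set.range q.2 = Set.univ}

namespace Shuffle

variable {a b n : ℕ}

lemma range_snd (p : Shuffle a b n) : Set.range p.1.2 = (Set.range p.1.1)ᶜ :=
  (IsCompl.compl_eq ⟨p.2.2.2.1, codisjoint_iff.mpr p.2.2.2.2⟩).symm

lemma image_snd (p : Shuffle a b n) : univ.image p.1.2 = (univ.image p.1.1)ᶜ := by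
  rw [← Finset.coe_inj, coe_compl]
  simpa using p.range_snd

lemma card_image_fst (p : Shuffle a b n) : #(univ.image p.1.1) = a := by
  rw [card_image_of_injective _ p.2.1.injective, card_fin]

def equivCard (hab : a + b = n) : Shuffle a b n ≃ {A : Finset (Fin n) // #A = a} where
  toFun p := ⟨univ.image p.1.1, p.card_image_fst⟩
  invFun A :=
    have hAc : #(A : Finset (Fin n))ᶜ = b := by rw [card_compl, A.2, Fintype.card_fin]; omega
    ⟨((A.1.orderEmbOfFin A.2 : Fin a → Fin n), (A.1ᶜ.orderEmbOfFin hAc : Fin b → Fin n)),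
      (A.1.orderEmbOfFin A.2).strictMono, (A.1ᶜ.orderEmbOfFin hAc).strictMono,
      by simp [range_orderEmbOfFin, disjoint_compl_right],
      by simp [range_orderEmbOfFin]⟩
  left_inv p := by
    refine Subtype.ext (Prod.ext ?_ ?_)
    · exact (orderEmbOfFin_unique _ (fun i => mem_image_of_mem _ (mem_univ i)) p.2.1).symm
    · refine (orderEmbOfFin_unique _ (fun i => ?_) p.2.2.1).symm
      rw [← image_snd]
      exact mem_image_of_mem _ (mem_univ i)
  right_inv A := Subtype.ext (image_orderEmbOfFin_univ _ _)

@[simp]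
lemma coe_equivCard_apply (hab : a + b = n) (p : Shuffle a b n) :
    (equivCard hab p : Finset (Fin n)) = univ.image p.1.1 := rfl

end Shuffle

/-- The shuffle formula: if `F∣[k₁](γ₁−1)⋯(γ_s−1) = 0` and `G∣[k₂](δ₁−1)⋯(δ_t−1) = 0`
for all group elements, then `(F⬝G)∣[k₁+k₂](γ₁−1)⋯(γ_{s+t−2}−1)` is the sum over shuffles
of `{1,...,s+t−2}` into blocks of sizes `s−1` and `t−1` of the corresponding products. -/
theorem slash_shuffle_formula (Γ : Subgroup (Matrix.SpecialLinearGroup (Fin 2) ℝ))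
    (k₁ k₂ : ℤ) (F G : ℍ → ℂ) (s t : ℕ) (hs : 1 ≤ s) (ht : 1 ≤ t)
    (hF : ∀ γ : Fin s → Γ, iterSlashDiff k₁ F (List.ofFn fun i => (γ i : _)) = 0)
    (hG : ∀ δ : Fin t → Γ, iterSlashDiff k₂ G (List.ofFn fun i => (δ i : _)) = 0) :
    ∀ γ : Fin (s + t - 2) → Γ,
      iterSlashDiff (k₁ + k₂) (F * G) (List.ofFn fun i => (γ i : _)) =
        ∑ᶠ p : {q : (Fin (s - 1) → Fin (s + t - 2)) × (Fin (t - 1) → Fin (s + t - 2)) //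
            StrictMono q.1 ∧ StrictMono q.2 ∧ Disjoint (Set.range q.1) (Set.range q.2) ∧
              Set.range q.1 ∪ Set.range q.2 = Set.univ},
          iterSlashDiff k₁ F (List.ofFn fun i => (γ (p.val.1 i) : _)) *
            iterSlashDiff k₂ G (List.ofFn fun i => (γ (p.val.2 i) : _)) := by
  intro γ
  let γ' : Fin (s + t - 2) → SL2 := fun i => γ i
  let f (A : Finset (Fin (s + t - 2))) : ℍ → ℂ := iterSlashDiff k₁ F (subword γ' A)
  let g (B : Finset (Fin (s + t - 2))) : ℍ → ℂ := iterSlashDiff k₂ G (subword γ' B)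
  have hsubword : ∀ A, ∀ x ∈ subword γ' A, x ∈ Γ := fun A x hx => by
    obtain ⟨i, -, rfl⟩ := List.mem_map.mp hx
    exact (γ i).2
  have hf : ∀ A, s - 1 < #A → f A = 0 := fun A hA =>
    iterSlashDiff_eq_zero_of_length_le hF (hsubword A) (by simp; omega)
  have hg : ∀ B, t - 1 < #B → g B = 0 := fun B hB =>
    iterSlashDiff_eq_zero_of_length_le hG (hsubword B) (by simp; omega)
  calc iterSlashDiff (k₁ + k₂) (F * G) (List.ofFn γ')
      = ∑ c : Fin (s + t - 2) → Fin 3, f {i | c i ≠ 1} * g {i | c i ≠ 0} :=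
        iterSlashDiff_mul_ofFn k₁ k₂ γ' F G
    _ = ∑ A : {A : Finset (Fin (s + t - 2)) // #A = s - 1}, f A * g (A : Finset _)ᶜ :=
        sum_fin_three_eq_sum_card (by simp; omega) f g hf hg
    _ = _ := by
        rw [← finsum_eq_sum_of_fintype]
        refine (finsum_eq_of_bijective (Shuffle.equivCard (by omega)) (Equiv.bijective _)
          fun p => ?_).symm
        simp only [f, g, Shuffle.coe_equivCard_apply, ← p.image_snd]
        rw [subword_image_of_strictMono γ' p.2.1, subword_image_of_strictMono γ' p.2.2.1]
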